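/- arXiv:2005.06776 — 2 statements merged into one kernel-verified Lean document; each statement's English description precedes it below -/
import Mathlib

section
/- Let $p \in (0,1)$ and define $g(N) = \frac{1-p}{N}\sqrt{\frac{1-(1-p)^N}{(1-p)^N}}$ for real $N > 0$. Then $g$ attains its minimum over $(0,\infty)$ at the unique point $N^* = -c_\star / \log(1-p)$, where $c_\star = 2 + W(-2e^{-2})$ and $W$ is the principal branch of the Lambert W function; equivalently, at the minimizer $(1-p)^{N^*} = e^{-c_\star}$. -/
/-!
Substituting `x = -N log(1-p)` turns `(1-p)^N` into `e^{-x}`, so that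
`g(N) = (1-p)(-log(1-p)) · √φ(x)` with `φ(x) = (eˣ - 1)/x²`. Since `φ'(x) = ψ(x)/x³` with
`ψ(x) = eˣ(x - 2) + 2`, and `ψ` vanishes at `0`, decreases on `[0, 1]` and increases on `[1, ∞)`,
`φ` has a unique minimizer on `(0, ∞)`: the root `c ≥ 1` of `ψ`. The roots of `ψ` are the
solutions of `(c - 2)e^{c-2} = -2e⁻²`; the branch condition `c - 2 ≥ -1` discards the root `0`.
-/

open Real Set

lemma isMinOn_and_eq_of_forall_ne_lt {α β : Type*} [Preorder β] {f : α → β} {s : Set α}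
    {c : α} (hc : c ∈ s) (h : ∀ x ∈ s, x ≠ c → f c < f x) :
    IsMinOn f s c ∧ ∀ x ∈ s, IsMinOn f s x → x = c := by
  refine ⟨fun x hx => ?_, fun x hx hmin => ?_⟩
  · rcases eq_or_ne x c with rfl | hne
    · exact le_rfl
    · exact (h x hx hne).le
  · by_contra hne
    exact (h x hx hne).not_ge (hmin hc)

lemma exp_mul_sub_two_add_two_eq_zero {c : ℝ}
    (hW : (c - 2) * exp (c - 2) = -2 * exp (-2)) : exp c * (c - 2) + 2 = 0 := by
  rw [sub_eq_add_neg, exp_add] at hW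
  have := exp_pos (-2)
  nlinarith

lemma hasDerivAt_exp_mul_sub_two_add_two (x : ℝ) :
    HasDerivAt (fun x => exp x * (x - 2) + 2) (exp x * (x - 1)) x := by
  refine (((hasDerivAt_exp x).mul ((hasDerivAt_id' x).sub_const 2)).add_const 2).congr_deriv ?_
  ring

lemma strictAntiOn_exp_mul_sub_two_add_two :
    StrictAntiOn (fun x => exp x * (x - 2) + 2) (Icc 0 1) := by
  refine strictAntiOn_of_deriv_neg (convex_Icc 0 1)
    (fun x _ => (hasDerivAt_exp_mul_sub_two_add_two x).continuousAt.continuousWithinAt)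
    fun x hx => ?_
  rw [interior_Icc] at hx
  rw [(hasDerivAt_exp_mul_sub_two_add_two x).deriv]
  exact mul_neg_of_pos_of_neg (exp_pos x) (by linarith [hx.2])

lemma strictMonoOn_exp_mul_sub_two_add_two :
    StrictMonoOn (fun x => exp x * (x - 2) + 2) (Ici 1) := by
  refine strictMonoOn_of_deriv_pos (convex_Ici 1)
    (fun x _ => (hasDerivAt_exp_mul_sub_two_add_two x).continuousAt.continuousWithinAt)
    fun x hx => ?_
  rw [interior_Ici] at hx
  rw [(hasDerivAt_exp_mul_sub_two_add_two x).deriv]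
  exact mul_pos (exp_pos x) (by linarith [mem_Ioi.1 hx])

lemma exp_mul_sub_two_add_two_neg {c : ℝ} (hc1 : 1 ≤ c) (hc : exp c * (c - 2) + 2 = 0) {x : ℝ}
    (hx0 : 0 < x) (hxc : x < c) : exp x * (x - 2) + 2 < 0 := by
  rcases le_or_gt x 1 with hx1 | hx1
  · simpa using strictAntiOn_exp_mul_sub_two_add_two (left_mem_Icc.2 zero_le_one)
      ⟨hx0.le, hx1⟩ hx0
  · simpa [hc] using strictMonoOn_exp_mul_sub_two_add_two hx1.le hc1 hxc

lemma exp_mul_sub_two_add_two_pos {c : ℝ} (hc1 : 1 ≤ c) (hc : exp c * (c - 2) + 2 = 0) {x : ℝ}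
    (hxc : c < x) : 0 < exp x * (x - 2) + 2 := by
  simpa [hc] using strictMonoOn_exp_mul_sub_two_add_two hc1 (hc1.trans hxc.le) hxc

lemma hasDerivAt_exp_sub_one_div_sq {x : ℝ} (hx : x ≠ 0) :
    HasDerivAt (fun x => (exp x - 1) / x ^ 2) ((exp x * (x - 2) + 2) / x ^ 3) x := by
  refine (((hasDerivAt_exp x).sub_const 1).div (hasDerivAt_pow 2 x) (pow_ne_zero 2 hx)).congr_deriv ?_
  field_simp
  ring

lemma strictAntiOn_exp_sub_one_div_sq {c : ℝ} (hc1 : 1 ≤ c) (hc : exp c * (c - 2) + 2 = 0) :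
    StrictAntiOn (fun x => (exp x - 1) / x ^ 2) (Ioc 0 c) := by
  refine strictAntiOn_of_deriv_neg (convex_Ioc 0 c)
    (fun x hx => (hasDerivAt_exp_sub_one_div_sq hx.1.ne').continuousAt.continuousWithinAt)
    fun x hx => ?_
  rw [interior_Ioc] at hx
  rw [(hasDerivAt_exp_sub_one_div_sq hx.1.ne').deriv]
  exact div_neg_of_neg_of_pos (exp_mul_sub_two_add_two_neg hc1 hc hx.1 hx.2) (pow_pos hx.1 3)

lemma strictMonoOn_exp_sub_one_div_sq {c : ℝ} (hc1 : 1 ≤ c) (hc : exp c * (c - 2) + 2 = 0) :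
    StrictMonoOn (fun x => (exp x - 1) / x ^ 2) (Ici c) := by
  have hc0 : 0 < c := one_pos.trans_le hc1
  refine strictMonoOn_of_deriv_pos (convex_Ici c)
    (fun x hx => (hasDerivAt_exp_sub_one_div_sq (hc0.trans_le hx).ne').continuousAt.continuousWithinAt)
    fun x hx => ?_
  rw [interior_Ici] at hx
  have hx0 : 0 < x := hc0.trans hx
  rw [(hasDerivAt_exp_sub_one_div_sq hx0.ne').deriv]
  exact div_pos (exp_mul_sub_two_add_two_pos hc1 hc hx) (pow_pos hx0 3)

lemma exp_sub_one_div_sq_lt {c : ℝ} (hc1 : 1 ≤ c) (hc : exp c * (c - 2) + 2 = 0) {x : ℝ}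
    (hx0 : 0 < x) (hxc : x ≠ c) : (exp c - 1) / c ^ 2 < (exp x - 1) / x ^ 2 := by
  rcases hxc.lt_or_gt with hlt | hgt
  · exact strictAntiOn_exp_sub_one_div_sq hc1 hc ⟨hx0, hlt.le⟩
      (right_mem_Ioc.2 (one_pos.trans_le hc1)) hlt
  · exact strictMonoOn_exp_sub_one_div_sq hc1 hc self_mem_Ici hgt.le hgt

lemma div_mul_sqrt_one_sub_rpow_div_rpow {q N : ℝ} (hq0 : 0 < q) (hq1 : q < 1) (hN : 0 < N) :
    q / N * √((1 - q ^ N) / q ^ N) =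
      q * -log q * √((exp (-log q * N) - 1) / (-log q * N) ^ 2) := by
  have hx : 0 < -log q * N := mul_pos (neg_pos.2 (log_neg hq0 hq1)) hN
  have hratio : (1 - q ^ N) / q ^ N = exp (-log q * N) - 1 := by
    rw [rpow_def_of_pos hq0, div_eq_iff (exp_ne_zero _), sub_mul, ← exp_add, neg_mul,
      neg_add_cancel, exp_zero, one_mul]
  have hexp : 0 ≤ exp (-log q * N) - 1 := sub_nonneg.2 (one_le_exp hx.le)
  rw [hratio, sqrt_div hexp, sqrt_sq hx.le]
  field_simp [(log_neg hq0 hq1).ne]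

/-- The asymptotic confidence-interval prefactor `g(N) = (1-p)/N · √((1-(1-p)^N)/(1-p)^N)`
attains its minimum over `(0,∞)` at the unique point `N* = -c⋆ / log(1-p)`, where
`c⋆ = 2 + W(-2e⁻²)` with `W` the principal Lambert W branch; the Lambert value is
characterized by `(c⋆-2) e^{c⋆-2} = -2 e⁻²` together with `c⋆ - 2 ≥ -1` (principal branch).
Equivalently, at the minimizer, `(1-p)^{N*} = e^{-c⋆}`. -/
theorem stmt2 (p : ℝ) (hp : p ∈ Set.Ioo (0:ℝ) 1)
    (c : ℝ) (hbranch : -1 ≤ c - 2) (hW : (c - 2) * Real.exp (c - 2) = -2 * Real.exp (-2)) :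
    let g : ℝ → ℝ := fun N => (1 - p) / N * Real.sqrt ((1 - (1 - p) ^ N) / (1 - p) ^ N)
    let Nstar : ℝ := -c / Real.log (1 - p)
    Nstar ∈ Set.Ioi (0:ℝ) ∧
    IsMinOn g (Set.Ioi (0:ℝ)) Nstar ∧
    (∀ N ∈ Set.Ioi (0:ℝ), IsMinOn g (Set.Ioi (0:ℝ)) N → N = Nstar) ∧
    (1 - p) ^ Nstar = Real.exp (-c) := by
  intro g Nstar
  have hq0 : 0 < 1 - p := sub_pos.2 hp.2
  have hq1 : 1 - p < 1 := sub_lt_self 1 hp.1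
  have hlog : log (1 - p) < 0 := log_neg hq0 hq1
  have hL : 0 < -log (1 - p) := neg_pos.2 hlog
  have hc1 : 1 ≤ c := by linarith
  have hc := exp_mul_sub_two_add_two_eq_zero hW
  have hLN : -log (1 - p) * Nstar = c := by
    change -log (1 - p) * (-c / log (1 - p)) = c
    field_simp [hlog.ne]
  have hN0 : 0 < Nstar := pos_of_mul_pos_right (hLN ▸ one_pos.trans_le hc1) hL.le
  have hlt : ∀ N ∈ Ioi (0 : ℝ), N ≠ Nstar → g Nstar < g N := by
    intro N hN hne
    simp only [g, div_mul_sqrt_one_sub_rpow_div_rpow hq0 hq1 hN0,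
      div_mul_sqrt_one_sub_rpow_div_rpow hq0 hq1 hN, hLN]
    refine mul_lt_mul_of_pos_left (sqrt_lt_sqrt ?_ ?_) (mul_pos hq0 hL)
    · exact div_nonneg (sub_nonneg.2 (one_le_exp (by linarith))) (sq_nonneg c)
    · refine exp_sub_one_div_sq_lt hc1 hc (mul_pos hL hN) fun h => hne ?_
      exact mul_left_cancel₀ hL.ne' (h.trans hLN.symm)
  obtain ⟨hmin, huniq⟩ := isMinOn_and_eq_of_forall_ne_lt hN0 hlt
  refine ⟨hN0, hmin, huniq, ?_⟩
  rw [rpow_def_of_pos hq0, ← hLN]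
  ring_nf
end

section
/- Let $p \in (0,1)$ and $g(N) = \frac{1-p}{N}\sqrt{\frac{1-(1-p)^N}{(1-p)^N}}$. With the substitution $u = -N\log(1-p)$, the minimization of $g$ reduces to minimizing $h(u) = \frac{\sqrt{e^u - 1}}{u}$ over $u > 0$, and $h$ has a unique critical point $u^* > 0$ satisfying $u^* e^{u^*} = 2(e^{u^*}-1)$. -/
/-!
With `u = -N log q` we have `q ^ N = e^{-u}`, so `(1 - q^N) / q^N = e^u - 1` and `g` is
`q (-log q) · h(u)`. The derivative of `h(u) = √(e^u - 1) / u` is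
`(u e^u - 2 (e^u - 1)) / (2 u² √(e^u - 1))`, so its critical points are the zeros of
`φ(u) = u e^u - 2 (e^u - 1)` (`critGap`). Since `φ(0) = 0` and `φ'(u) = (u - 1) e^u`, `φ` is
negative on `(0, 1]` and strictly increasing on `[1, ∞)`, with `φ(1) = 2 - e < 0 < 2 = φ(2)`:
exactly one positive zero.
-/

open Real Set

namespace GroupTesting

lemma rpow_prefactor_eq (q N : ℝ) (hq : 0 < q) :
    q / N * √((1 - q ^ N) / q ^ N) =
      q * (-log q) * (√(exp (-N * log q) - 1) / (-N * log q)) := by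
  have hpow : q ^ N = exp (-(-N * log q)) := by
    rw [rpow_def_of_pos hq, neg_mul, neg_neg, mul_comm]
  have hratio : (1 - q ^ N) / q ^ N = exp (-N * log q) - 1 := by
    rw [hpow, exp_neg]
    field_simp
  rw [hratio]
  rcases eq_or_ne N 0 with rfl | hN
  · simp
  rcases eq_or_ne (log q) 0 with hlog | hlog
  · simp [hlog]
  field_simp

noncomputable def critGap (u : ℝ) : ℝ := u * exp u - 2 * (exp u - 1)

lemma hasDerivAt_critGap (u : ℝ) : HasDerivAt critGap ((u - 1) * exp u) u := by
  refine (((hasDerivAt_id' u).mul (hasDerivAt_exp u)).sub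
    (((hasDerivAt_exp u).sub_const 1).const_mul 2)).congr_deriv ?_
  ring

lemma continuous_critGap : Continuous critGap := by
  unfold critGap
  fun_prop

lemma critGap_neg {u : ℝ} (hu : 0 < u) (hu1 : u ≤ 1) : critGap u < 0 := by
  have hanti : StrictAntiOn critGap (Icc 0 1) := by
    refine strictAntiOn_of_deriv_neg (convex_Icc 0 1) continuous_critGap.continuousOn ?_
    intro x hx
    rw [interior_Icc] at hx
    rw [(hasDerivAt_critGap x).deriv]
    exact mul_neg_of_neg_of_pos (by linarith [hx.2]) (exp_pos x)
  have h := hanti (left_mem_Icc.mpr zero_le_one) ⟨hu.le, hu1⟩ hu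
  simpa [critGap] using h

lemma strictMonoOn_critGap : StrictMonoOn critGap (Ici 1) := by
  refine strictMonoOn_of_deriv_pos (convex_Ici 1) continuous_critGap.continuousOn ?_
  intro x hx
  rw [interior_Ici] at hx
  rw [(hasDerivAt_critGap x).deriv]
  exact mul_pos (by linarith [mem_Ioi.mp hx]) (exp_pos x)

lemma exists_critGap_eq_zero : ∃ u ∈ Icc (1 : ℝ) 2, critGap u = 0 := by
  have h1 : critGap 1 < 0 := by
    have := exp_one_gt_d9
    simp only [critGap]
    linarith
  have h2 : 0 ≤ critGap 2 := by
    norm_num [critGap]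
  exact intermediate_value_Icc (by norm_num) continuous_critGap.continuousOn ⟨h1.le, h2⟩

lemma existsUnique_pos_critGap_eq_zero : ∃! u : ℝ, 0 < u ∧ critGap u = 0 := by
  obtain ⟨u, hu, hu0⟩ := exists_critGap_eq_zero
  refine ⟨u, ⟨one_pos.trans_le hu.1, hu0⟩, fun v ⟨hv, hv0⟩ => ?_⟩
  have hv1 : 1 ≤ v := by
    by_contra! hlt
    exact (critGap_neg hv hlt.le).ne hv0
  exact strictMonoOn_critGap.injOn hv1 hu.1 (hv0.trans hu0.symm)

lemma hasDerivAt_sqrt_exp_sub_one_div {u : ℝ} (hu : 0 < u) :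
    HasDerivAt (fun u => √(exp u - 1) / u)
      (critGap u / (2 * u ^ 2 * √(exp u - 1))) u := by
  have hpos : 0 < exp u - 1 := by linarith [add_one_lt_exp hu.ne']
  have hsqrt : 0 < √(exp u - 1) := sqrt_pos.mpr hpos
  refine ((((hasDerivAt_exp u).sub_const 1).sqrt hpos.ne').div (hasDerivAt_id' u)
    hu.ne').congr_deriv ?_
  have hsq := sq_sqrt hpos.le
  field_simp
  rw [hsq, critGap]
  ring

lemma deriv_sqrt_exp_sub_one_div_eq_zero_iff {u : ℝ} (hu : 0 < u) :
    deriv (fun u => √(exp u - 1) / u) u = 0 ↔ critGap u = 0 := by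
  have hsqrt : 0 < √(exp u - 1) := sqrt_pos.mpr (by linarith [add_one_lt_exp hu.ne'])
  rw [(hasDerivAt_sqrt_exp_sub_one_div hu).deriv, div_eq_zero_iff]
  exact or_iff_left (by positivity)

end GroupTesting

/-- With the substitution `u = -N log(1-p)`, minimizing the confidence-interval prefactor
`g(N) = (1-p)/N · √((1-(1-p)^N)/(1-p)^N)` reduces to minimizing `h(u) = √(e^u - 1)/u`
over `u > 0` (g is a constant multiple of `h ∘ (N ↦ -N log(1-p))`), and `h` has a unique
positive critical point `u*`, which satisfies `u* e^{u*} = 2 (e^{u*} - 1)`. -/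
theorem stmt3 (p : ℝ) (hp : p ∈ Set.Ioo (0:ℝ) 1) :
    let g : ℝ → ℝ := fun N => (1 - p) / N * Real.sqrt ((1 - (1 - p) ^ N) / (1 - p) ^ N)
    let h : ℝ → ℝ := fun u => Real.sqrt (Real.exp u - 1) / u
    (∀ N : ℝ, 0 < N →
        g N = (1 - p) * (-Real.log (1 - p)) * h (-N * Real.log (1 - p))) ∧
    (∃! u : ℝ, 0 < u ∧ deriv h u = 0) ∧
    (∀ u : ℝ, 0 < u → deriv h u = 0 → u * Real.exp u = 2 * (Real.exp u - 1)) := by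
  intro g h
  have hcrit (u : ℝ) (hu : 0 < u) : deriv h u = 0 ↔ GroupTesting.critGap u = 0 :=
    GroupTesting.deriv_sqrt_exp_sub_one_div_eq_zero_iff hu
  refine ⟨fun N _ => GroupTesting.rpow_prefactor_eq (1 - p) N (by linarith [hp.2]), ?_, ?_⟩
  · exact (existsUnique_congr fun u => and_congr_right (hcrit u)).mpr
      GroupTesting.existsUnique_pos_critGap_eq_zero
  · intro u hu hu0
    rw [← sub_eq_zero]
    exact (hcrit u hu).mp hu0
end
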